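/- In the Gaussian mixture model, the adversarial gap of f(x) = sgn(w^⊤x) (assuming w^⊤θ* ≥ 0) equals AG_ε(f) = Pr_{Z∼N(0,1)}[(w^⊤θ* - ε‖w‖_q)/√(w^⊤Σ*w) ≤ Z ≤ w^⊤θ*/√(w^⊤Σ*w)], and this satisfies AG_ε(f) ≤ Pr_{Z∼N(0,1)}[(w^⊤θ* - ε‖w‖_q)/√(w^⊤Σ*w) ≤ Z ≤ (w^⊤θ* + ε‖w‖_q)/√(w^⊤Σ*w)] ≤ 2·AG_ε(f). -/

import Mathlib

open Finset MeasureTheory ProbabilityTheory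
open scoped ENNReal

/-- Dot product on `ℝᵈ`. -/
noncomputable def dotp {d : ℕ} (a b : Fin d → ℝ) : ℝ := ∑ i, a i * b i

/-- The `ℓ_p` norm on `ℝᵈ`. -/
noncomputable def lpnorm {d : ℕ} (p : ℝ) (a : Fin d → ℝ) : ℝ :=
  (∑ i, |a i| ^ p) ^ (1 / p)

/-- The sign function: `sg r = 1` if `r ≥ 0`, `-1` otherwise. -/
noncomputable def sg (r : ℝ) : ℝ := if 0 ≤ r then 1 else -1

/-- `ν` is the multivariate Gaussian `N(θ, S)`, characterized by all its one-dimensional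
projections: for every `w`, `wᵀX ∼ N(wᵀθ, wᵀSw)`. -/
def IsGaussianVec {d : ℕ} (θ : Fin d → ℝ) (S : Matrix (Fin d) (Fin d) ℝ)
    (ν : Measure (Fin d → ℝ)) : Prop :=
  ∀ w : Fin d → ℝ,
    ν.map (fun x => dotp w x)
      = gaussianReal (dotp w θ) (Real.toNNReal (dotp w (S.mulVec w)))

/-- The Gaussian mixture model: `y ∼ Unif{-1,+1}`, `x | y ∼ N(y θ, S)`; the joint law of
`(x, y)` on `ℝᵈ × ℝ`. -/
noncomputable def mixture {d : ℕ} (νpos νneg : Measure (Fin d → ℝ)) :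
    Measure ((Fin d → ℝ) × ℝ) :=
  (2 : ℝ≥0∞)⁻¹ • (νpos.map (fun x => (x, (1 : ℝ))))
    + (2 : ℝ≥0∞)⁻¹ • (νneg.map (fun x => (x, (-1 : ℝ))))

/-- The adversarial gap `AG_ε(f) = AdvRisk_ε(f) - Risk(f)` of `f(x) = sgn(wᵀx)` in the
Gaussian mixture model with `ℓ_p`-bounded adversary. -/
noncomputable def advGap {d : ℕ} (νpos νneg : Measure (Fin d → ℝ))
    (w : Fin d → ℝ) (p ε : ℝ) : ℝ :=
  (mixture νpos νneg
      {t | ∃ x', lpnorm p (fun i => x' i - t.1 i) ≤ ε ∧ sg (dotp w x') ≠ t.2}).toReal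
    - (mixture νpos νneg {t | sg (dotp w t.1) ≠ t.2}).toReal

/-! Under either class the score `wᵀx` is one-dimensional Gaussian, `N(±wᵀθ, wᵀSw)`. By Hölder
duality an `ℓ_p` perturbation of size `ε` moves the score by at most `c = ε‖w‖_q`, and the
extremal dual vector attains this, so the adversarial error event is `wᵀx < c` on class `+1` and
`-c ≤ wᵀx` on class `-1`; the reflection `x ↦ -x` exchanging the classes makes both contribute
`P(N(wᵀθ, wᵀSw) < c)`. Subtracting the case `c = 0` (the clean risk), the gap is the mass of
`[0, c]`. Finally `[-c, 0)` is the mirror image of `(0, c]` but lies further from the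
nonnegative mean `wᵀθ`, so its mass is at most that of `[0, c]`. -/

section Vectors

variable {d : ℕ}

lemma lpnorm_nonneg (p : ℝ) (a : Fin d → ℝ) : 0 ≤ lpnorm p a := by
  unfold lpnorm
  positivity

lemma lpnorm_const_mul {p : ℝ} (hp : 0 < p) (t : ℝ) (a : Fin d → ℝ) :
    lpnorm p (fun i => t * a i) = |t| * lpnorm p a := by
  simp only [lpnorm, abs_mul, Real.mul_rpow (abs_nonneg t) (abs_nonneg _), ← Finset.mul_sum]
  rw [Real.mul_rpow (by positivity) (by positivity), ← Real.rpow_mul (abs_nonneg t),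
    mul_one_div_cancel hp.ne', Real.rpow_one]

lemma abs_dotp_le_lpnorm_mul_lpnorm {p q : ℝ} (hpq : p.HolderConjugate q) (w u : Fin d → ℝ) :
    |dotp w u| ≤ lpnorm q w * lpnorm p u := by
  calc |dotp w u| ≤ ∑ i, |w i| * |u i| := by
        simpa only [dotp, abs_mul] using
          Finset.abs_sum_le_sum_abs (fun i => w i * u i) Finset.univ
    _ ≤ lpnorm q w * lpnorm p u := by
        simpa only [lpnorm, abs_abs] using
          Real.inner_le_Lp_mul_Lq Finset.univ (fun i => |w i|) (fun i => |u i|) hpq.symm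

lemma abs_sg (r : ℝ) : |sg r| = 1 := by
  unfold sg; split_ifs <;> simp

lemma mul_sg_self (r : ℝ) : r * sg r = |r| := by
  unfold sg; split_ifs with h
  · rw [mul_one, abs_of_nonneg h]
  · rw [mul_neg_one, abs_of_neg (not_le.mp h)]

lemma exists_lpnorm_le_one_dotp_eq {p q : ℝ} (hpq : p.HolderConjugate q) (w : Fin d → ℝ) :
    ∃ v : Fin d → ℝ, lpnorm p v ≤ 1 ∧ dotp w v = lpnorm q w := by
  rcases (lpnorm_nonneg q w).eq_or_lt with hN | hN
  · exact ⟨0, by simp [lpnorm, Real.zero_rpow hpq.ne_zero, hpq.ne_zero], by simpa [dotp] using hN⟩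
  set N := lpnorm q w with hNdef
  set a : Fin d → ℝ := fun i => |w i| / N
  have ha : ∀ i, 0 ≤ a i := fun i => by positivity
  have hsum : ∑ i, a i ^ q = 1 := by
    have hNq : N ^ q = ∑ i, |w i| ^ q := by
      rw [hNdef, lpnorm, ← Real.rpow_mul (by positivity), one_div_mul_cancel hpq.symm.ne_zero,
        Real.rpow_one]
    have hterm : ∀ i, a i ^ q = |w i| ^ q / N ^ q := fun i => Real.div_rpow (abs_nonneg _) hN.le q
    rw [Finset.sum_congr rfl fun i _ => hterm i, ← Finset.sum_div, ← hNq,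
      div_self (Real.rpow_pos_of_pos hN q).ne']
  refine ⟨fun i => sg (w i) * a i ^ (q - 1), ?_, ?_⟩
  · have hterm : ∀ i, |sg (w i) * a i ^ (q - 1)| ^ p = a i ^ q := fun i => by
      rw [abs_mul, abs_sg, one_mul, abs_of_nonneg (by positivity), ← Real.rpow_mul (ha i),
        hpq.symm.sub_one_mul_conj]
    simp only [lpnorm, hterm, hsum, Real.one_rpow, le_refl]
  · have hterm : ∀ i, w i * (sg (w i) * a i ^ (q - 1)) = N * a i ^ q := fun i => by
      have hwa : |w i| = N * a i := (mul_div_cancel₀ _ hN.ne').symm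
      rw [← mul_assoc, mul_sg_self, hwa, mul_assoc, ← Real.rpow_one_add' (ha i) (by
        linarith [hpq.symm.lt]), add_sub_cancel]
    simp only [dotp, hterm, ← Finset.mul_sum, hsum, mul_one]

end Vectors

section Perturbation

variable {d : ℕ} {p q : ℝ}

lemma dotp_image_lpnorm_ball (hpq : p.HolderConjugate q) (w x : Fin d → ℝ) {ε : ℝ}
    (hε : 0 ≤ ε) :
    dotp w '' {x' | lpnorm p (fun i => x' i - x i) ≤ ε}
      = Set.Icc (dotp w x - ε * lpnorm q w) (dotp w x + ε * lpnorm q w) := by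
  apply subset_antisymm
  · rintro _ ⟨x', hx', rfl⟩
    have hdiff : dotp w (fun i => x' i - x i) = dotp w x' - dotp w x := by
      simp only [dotp, mul_sub, Finset.sum_sub_distrib]
    have hbound := (abs_dotp_le_lpnorm_mul_lpnorm hpq w (fun i => x' i - x i)).trans
      (mul_le_mul_of_nonneg_left hx' (lpnorm_nonneg q w))
    rw [hdiff, abs_le] at hbound
    constructor <;> linarith [hbound.1, hbound.2]
  · obtain ⟨v, hv, hwv⟩ := exists_lpnorm_le_one_dotp_eq hpq w
    have hline : ∀ t, dotp w (fun i => x i + t * v i) = dotp w x + t * lpnorm q w := fun t => by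
      simp only [dotp, mul_add, Finset.sum_add_distrib, mul_left_comm _ t, ← Finset.mul_sum]
      rw [← hwv]
      rfl
    intro s hs
    obtain ⟨t, ht, rfl⟩ := intermediate_value_Icc (neg_le_self hε)
      (f := fun t => dotp w x + t * lpnorm q w) (by fun_prop)
      (by simpa only [neg_mul, ← sub_eq_add_neg] using hs)
    refine ⟨fun i => x i + t * v i, ?_, hline t⟩
    calc lpnorm p (fun i => (x i + t * v i) - x i) = |t| * lpnorm p v := by
          simp only [add_sub_cancel_left, lpnorm_const_mul hpq.pos]
      _ ≤ ε := by nlinarith [abs_le.2 ht, abs_nonneg t]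

lemma exists_lpnorm_sub_le_and_iff (hpq : p.HolderConjugate q) (w x : Fin d → ℝ) {ε : ℝ}
    (hε : 0 ≤ ε) (P : ℝ → Prop) :
    (∃ x', lpnorm p (fun i => x' i - x i) ≤ ε ∧ P (dotp w x'))
      ↔ ∃ s ∈ Set.Icc (dotp w x - ε * lpnorm q w) (dotp w x + ε * lpnorm q w), P s := by
  rw [← dotp_image_lpnorm_ball hpq w x hε, Set.exists_mem_image]
  rfl

lemma sg_ne_one_iff {r : ℝ} : sg r ≠ 1 ↔ r < 0 := by
  unfold sg
  split_ifs with h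
  · simpa using h
  · norm_num [not_le.mp h]

lemma sg_ne_neg_one_iff {r : ℝ} : sg r ≠ -1 ↔ 0 ≤ r := by
  unfold sg
  split_ifs with h
  · norm_num [h]
  · simpa using h

lemma exists_lpnorm_sub_le_sg_ne_one_iff (hpq : p.HolderConjugate q) (w x : Fin d → ℝ)
    {ε : ℝ} (hε : 0 ≤ ε) :
    (∃ x', lpnorm p (fun i => x' i - x i) ≤ ε ∧ sg (dotp w x') ≠ 1)
      ↔ dotp w x < ε * lpnorm q w := by
  have hr : 0 ≤ ε * lpnorm q w := mul_nonneg hε (lpnorm_nonneg q w)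
  simp only [sg_ne_one_iff, exists_lpnorm_sub_le_and_iff hpq w x hε (· < 0)]
  constructor
  · rintro ⟨s, hs, hs0⟩
    linarith [hs.1]
  · intro h
    exact ⟨_, Set.left_mem_Icc.2 (by linarith), by linarith⟩

lemma exists_lpnorm_sub_le_sg_ne_neg_one_iff (hpq : p.HolderConjugate q) (w x : Fin d → ℝ)
    {ε : ℝ} (hε : 0 ≤ ε) :
    (∃ x', lpnorm p (fun i => x' i - x i) ≤ ε ∧ sg (dotp w x') ≠ -1)
      ↔ -(ε * lpnorm q w) ≤ dotp w x := by
  have hr : 0 ≤ ε * lpnorm q w := mul_nonneg hε (lpnorm_nonneg q w)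
  simp only [sg_ne_neg_one_iff, exists_lpnorm_sub_le_and_iff hpq w x hε (0 ≤ ·)]
  constructor
  · rintro ⟨s, hs, hs0⟩
    linarith [hs.2]
  · intro h
    exact ⟨_, Set.right_mem_Icc.2 (by linarith), by linarith⟩

end Perturbation

open scoped NNReal

section Gaussian

variable {μ : ℝ} {v : ℝ≥0}

lemma gaussianPDFReal_le_of_sq_le {μ' x y : ℝ} (h : (x - μ) ^ 2 ≤ (y - μ') ^ 2) :
    gaussianPDFReal μ' v y ≤ gaussianPDFReal μ v x := by
  unfold gaussianPDFReal
  refine mul_le_mul_of_nonneg_left (Real.exp_le_exp.2 ?_) (by positivity)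
  exact div_le_div_of_nonneg_right (neg_le_neg h) (by positivity)

lemma gaussianReal_neg_le (hv : v ≠ 0) (hμ : 0 ≤ μ) {s : Set ℝ} (hs : s ⊆ Set.Ici 0) :
    gaussianReal μ v (-s) ≤ gaussianReal μ v s := by
  have hmirror : gaussianReal μ v (-s) = gaussianReal (-μ) v s := by
    rw [← gaussianReal_map_neg]
    exact ((MeasurableEquiv.neg ℝ).map_apply s).symm
  rw [hmirror, gaussianReal_apply _ hv, gaussianReal_apply _ hv]
  refine setLIntegral_mono (measurable_gaussianPDF μ v) fun x hx => ?_
  refine ENNReal.ofReal_le_ofReal (gaussianPDFReal_le_of_sq_le ?_)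
  have hx0 : 0 ≤ x := hs hx
  nlinarith

lemma gaussianReal_Icc (μ : ℝ) (hv : v ≠ 0) (a b : ℝ) :
    gaussianReal μ v (Set.Icc a b)
      = gaussianReal 0 1 (Set.Icc ((μ - b) / √v) ((μ - a) / √v)) := by
  have hσ : 0 < √(v : ℝ) := Real.sqrt_pos.2 (by positivity)
  have hstd : (gaussianReal μ v).map (fun x => (μ - x) / √v) = gaussianReal 0 1 := by
    rw [← Function.comp_def (· / √(v : ℝ)) (μ - ·), ← Measure.map_map (by fun_prop) (by fun_prop),
      gaussianReal_map_const_sub, gaussianReal_map_div_const, sub_self, zero_div]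
    congr
    ext
    simp [Real.sq_sqrt v.coe_nonneg, hv]
  rw [← hstd, Measure.map_apply (by fun_prop) measurableSet_Icc]
  congr
  ext x
  simp only [Set.mem_preimage, Set.mem_Icc, div_le_div_iff_of_pos_right hσ, sub_le_sub_iff_left,
    and_comm]

lemma gaussianReal_real_Icc_zero_le_Icc_neg_le_two_mul (hv : v ≠ 0) (hμ : 0 ≤ μ) {c : ℝ}
    (hc : 0 ≤ c) :
    (gaussianReal μ v).real (Set.Icc 0 c) ≤ (gaussianReal μ v).real (Set.Icc (-c) c) ∧
      (gaussianReal μ v).real (Set.Icc (-c) c) ≤ 2 * (gaussianReal μ v).real (Set.Icc 0 c) := by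
  set N := gaussianReal μ v
  have hsplit : N.real (Set.Icc (-c) c) = N.real (Set.Ico (-c) 0) + N.real (Set.Icc 0 c) := by
    rw [← Set.Ico_union_Icc_eq_Icc (neg_nonpos.2 hc) hc, measureReal_union
      ((Set.Iio_disjoint_Ici le_rfl).mono Set.Ico_subset_Iio_self Set.Icc_subset_Ici_self)
      measurableSet_Icc]
  have hfar : N.real (Set.Ico (-c) 0) ≤ N.real (Set.Icc 0 c) :=
    calc N.real (Set.Ico (-c) 0) = N.real (-Set.Ioc 0 c) := by rw [Set.neg_Ioc, neg_zero]
      _ ≤ N.real (Set.Ioc 0 c) := ENNReal.toReal_mono (measure_ne_top _ _)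
          (gaussianReal_neg_le hv hμ (Set.Ioc_subset_Ioi_self.trans Set.Ioi_subset_Ici_self))
      _ ≤ N.real (Set.Icc 0 c) := measureReal_mono Set.Ioc_subset_Icc_self
  constructor <;> linarith [measureReal_nonneg (μ := N) (s := Set.Ico (-c) 0)]

end Gaussian

section Mixture

variable {d : ℕ}

lemma mixture_apply (νpos νneg : Measure (Fin d → ℝ)) (E : Set ((Fin d → ℝ) × ℝ)) :
    mixture νpos νneg E
      = 2⁻¹ * νpos ((fun x => (x, (1 : ℝ))) ⁻¹' E)
        + 2⁻¹ * νneg ((fun x => (x, (-1 : ℝ))) ⁻¹' E) := by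
  simp only [mixture, Measure.add_apply, Measure.smul_apply, smul_eq_mul,
    (measurableEmbedding_prod_mk_right _).map_apply]

lemma measurable_dotp (w : Fin d → ℝ) : Measurable (dotp w) := by
  unfold dotp
  fun_prop

lemma mixture_eq_gaussianReal_Iio {θ : Fin d → ℝ} {S : Matrix (Fin d) (Fin d) ℝ}
    {νpos νneg : Measure (Fin d → ℝ)}
    (hpos : IsGaussianVec θ S νpos) (hneg : IsGaussianVec (fun i => -θ i) S νneg)
    {w : Fin d → ℝ} (hS : 0 < dotp w (S.mulVec w)) {E : Set ((Fin d → ℝ) × ℝ)} {c : ℝ}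
    (hE₁ : (fun x => (x, (1 : ℝ))) ⁻¹' E = dotp w ⁻¹' Set.Iio c)
    (hE₂ : (fun x => (x, (-1 : ℝ))) ⁻¹' E = dotp w ⁻¹' Set.Ici (-c)) :
    mixture νpos νneg E
      = gaussianReal (dotp w θ) (dotp w (S.mulVec w)).toNNReal (Set.Iio c) := by
  have := nullSingletonClass_gaussianReal (μ := dotp w θ) (Real.toNNReal_pos.2 hS).ne'
  have hneg_mean : dotp w (fun i => -θ i) = -dotp w θ := by
    simp only [dotp, mul_neg, Finset.sum_neg_distrib]
  rw [mixture_apply, hE₁, hE₂, ← Measure.map_apply (measurable_dotp w) measurableSet_Iio,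
    ← Measure.map_apply (measurable_dotp w) measurableSet_Ici, hpos w, hneg w, hneg_mean,
    ← gaussianReal_map_neg, Measure.map_apply measurable_neg measurableSet_Ici,
    show (fun x : ℝ => -x) ⁻¹' Set.Ici (-c) = Set.Iic c by ext; simp,
    measure_congr Iio_ae_eq_Iic.symm, ← add_mul, ENNReal.inv_two_add_inv_two, one_mul]

end Mixture

lemma advGap_eq_gaussianReal_Icc {d : ℕ} {θ : Fin d → ℝ} {S : Matrix (Fin d) (Fin d) ℝ}
    {νpos νneg : Measure (Fin d → ℝ)}
    (hpos : IsGaussianVec θ S νpos) (hneg : IsGaussianVec (fun i => -θ i) S νneg)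
    {w : Fin d → ℝ} (hS : 0 < dotp w (S.mulVec w)) {p q : ℝ} (hpq : p.HolderConjugate q)
    {ε : ℝ} (hε : 0 ≤ ε) :
    advGap νpos νneg w p ε
      = (gaussianReal (dotp w θ) (dotp w (S.mulVec w)).toNNReal).real
          (Set.Icc 0 (ε * lpnorm q w)) := by
  have := nullSingletonClass_gaussianReal (μ := dotp w θ) (Real.toNNReal_pos.2 hS).ne'
  have hc : 0 ≤ ε * lpnorm q w := mul_nonneg hε (lpnorm_nonneg q w)
  have hadv := mixture_eq_gaussianReal_Iio (E := {t | ∃ x', lpnorm p (fun i => x' i - t.1 i) ≤ ε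
      ∧ sg (dotp w x') ≠ t.2}) (c := ε * lpnorm q w) hpos hneg hS
    (Set.ext fun x => exists_lpnorm_sub_le_sg_ne_one_iff hpq w x hε)
    (Set.ext fun x => exists_lpnorm_sub_le_sg_ne_neg_one_iff hpq w x hε)
  have hrisk := mixture_eq_gaussianReal_Iio (E := {t | sg (dotp w t.1) ≠ t.2}) (c := 0)
    hpos hneg hS (Set.ext fun _ => sg_ne_one_iff)
    (Set.ext fun _ => sg_ne_neg_one_iff.trans (by simp))
  rw [advGap, hadv, hrisk, ← Measure.real_def, ← Measure.real_def, ← Set.Iio_union_Ico_eq_Iio hc,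
    measureReal_union ((Set.Iio_disjoint_Ici le_rfl).mono_right Set.Ico_subset_Ici_self)
      measurableSet_Ico, measureReal_congr Ico_ae_eq_Icc, add_sub_cancel_left]

theorem gaussian_mixture_advGap_general {d : ℕ} (θ : Fin d → ℝ) (S : Matrix (Fin d) (Fin d) ℝ)
    (νpos νneg : Measure (Fin d → ℝ))
    (hpos : IsGaussianVec θ S νpos) (hneg : IsGaussianVec (fun i => -θ i) S νneg)
    (w : Fin d → ℝ) (hS : 0 < dotp w (S.mulVec w))
    (hwθ : 0 ≤ dotp w θ)
    (p q : ℝ) (hp : 1 ≤ p) (hq : 1 ≤ q) (hpq : 1 / p + 1 / q = 1)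
    (ε : ℝ) (hε : 0 ≤ ε) :
    advGap νpos νneg w p ε
        = (gaussianReal 0 1 (Set.Icc
            ((dotp w θ - ε * lpnorm q w) / Real.sqrt (dotp w (S.mulVec w)))
            (dotp w θ / Real.sqrt (dotp w (S.mulVec w))))).toReal ∧
      advGap νpos νneg w p ε
        ≤ (gaussianReal 0 1 (Set.Icc
            ((dotp w θ - ε * lpnorm q w) / Real.sqrt (dotp w (S.mulVec w)))
            ((dotp w θ + ε * lpnorm q w) / Real.sqrt (dotp w (S.mulVec w))))).toReal ∧
      (gaussianReal 0 1 (Set.Icc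
            ((dotp w θ - ε * lpnorm q w) / Real.sqrt (dotp w (S.mulVec w)))
            ((dotp w θ + ε * lpnorm q w) / Real.sqrt (dotp w (S.mulVec w))))).toReal
        ≤ 2 * advGap νpos νneg w p ε := by
  have hconj : p.HolderConjugate q := ⟨by simpa only [one_div, inv_one] using hpq, by linarith,
    by linarith⟩
  have hv : (dotp w (S.mulVec w)).toNNReal ≠ 0 := (Real.toNNReal_pos.2 hS).ne'
  have hσ : Real.sqrt (dotp w (S.mulVec w)) = √((dotp w (S.mulVec w)).toNNReal : ℝ) := by
    rw [Real.coe_toNNReal _ hS.le]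
  set N := gaussianReal (dotp w θ) (dotp w (S.mulVec w)).toNNReal
  set c := ε * lpnorm q w
  have hgap : gaussianReal 0 1 (Set.Icc ((dotp w θ - c) / Real.sqrt (dotp w (S.mulVec w)))
      (dotp w θ / Real.sqrt (dotp w (S.mulVec w)))) = N (Set.Icc 0 c) := by
    rw [hσ, gaussianReal_Icc _ hv, sub_zero]
  have hball : gaussianReal 0 1 (Set.Icc ((dotp w θ - c) / Real.sqrt (dotp w (S.mulVec w)))
      ((dotp w θ + c) / Real.sqrt (dotp w (S.mulVec w)))) = N (Set.Icc (-c) c) := by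
    rw [hσ, gaussianReal_Icc _ hv, sub_neg_eq_add]
  rw [advGap_eq_gaussianReal_Icc hpos hneg hS hconj hε, hgap, hball]
  exact ⟨rfl, gaussianReal_real_Icc_zero_le_Icc_neg_le_two_mul hv hwθ
    (mul_nonneg hε (lpnorm_nonneg q w))⟩

/-- In the Gaussian mixture model (with `wᵀθ* ≥ 0`), the adversarial gap of
`f(x) = sgn(wᵀx)` equals `Pr[(wᵀθ* - ε‖w‖_q)/s ≤ Z ≤ wᵀθ*/s]` where `s = √(wᵀΣ*w)`, and
`AG_ε(f) ≤ Pr[(wᵀθ* - ε‖w‖_q)/s ≤ Z ≤ (wᵀθ* + ε‖w‖_q)/s] ≤ 2 · AG_ε(f)`. -/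
theorem gaussian_mixture_advGap {d : ℕ} (θ : Fin d → ℝ) (S : Matrix (Fin d) (Fin d) ℝ)
    (νpos νneg : Measure (Fin d → ℝ)) [IsProbabilityMeasure νpos] [IsProbabilityMeasure νneg]
    (hpos : IsGaussianVec θ S νpos) (hneg : IsGaussianVec (fun i => -θ i) S νneg)
    (w : Fin d → ℝ) (hw : lpnorm 2 w = 1) (hS : 0 < dotp w (S.mulVec w))
    (hwθ : 0 ≤ dotp w θ)
    (p q : ℝ) (hp : 1 ≤ p) (hq : 1 ≤ q) (hpq : 1 / p + 1 / q = 1)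
    (ε : ℝ) (hε : 0 ≤ ε) :
    advGap νpos νneg w p ε
        = (gaussianReal 0 1 (Set.Icc
            ((dotp w θ - ε * lpnorm q w) / Real.sqrt (dotp w (S.mulVec w)))
            (dotp w θ / Real.sqrt (dotp w (S.mulVec w))))).toReal ∧
      advGap νpos νneg w p ε
        ≤ (gaussianReal 0 1 (Set.Icc
            ((dotp w θ - ε * lpnorm q w) / Real.sqrt (dotp w (S.mulVec w)))
            ((dotp w θ + ε * lpnorm q w) / Real.sqrt (dotp w (S.mulVec w))))).toReal ∧
      (gaussianReal 0 1 (Set.Icc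
            ((dotp w θ - ε * lpnorm q w) / Real.sqrt (dotp w (S.mulVec w)))
            ((dotp w θ + ε * lpnorm q w) / Real.sqrt (dotp w (S.mulVec w))))).toReal
        ≤ 2 * advGap νpos νneg w p ε :=
  gaussian_mixture_advGap_general θ S νpos νneg hpos hneg w hS hwθ p q hp hq hpq ε hε
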